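/- Let G be a group and α : G³ → ℂ* a 3-cocycle, i.e., α(h,k,l)·α(g,hk,l)·α(g,h,k) = α(gh,k,l)·α(g,h,kl) for all g,h,k,l ∈ G. Fix g ∈ G and define for h, k in the centralizer C_g: θ_g(h,k) = α(g,h,k)·α(h,k, k⁻¹h⁻¹ghk) / α(h, h⁻¹gh, k). Then θ_g is a 2-cocycle on C_g, i.e., θ_g(h,k)·θ_g(hk,l) = θ_g(k,l)·θ_g(h,kl) for all h,k,l ∈ C_g. -/

import Mathlib

/-- Transgression of a 3-cocycle: if `α : G³ → ℂ*` satisfies the 3-cocycle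
identity, `g ∈ G`, and
`θ_g(h,k) = α(g,h,k)·α(h,k,k⁻¹h⁻¹ghk)·α(h,h⁻¹gh,k)⁻¹`, then `θ_g` satisfies
the 2-cocycle identity on the centralizer `C_g`. -/
theorem transgressed_two_cocycle {G : Type*} [Group G]
    (α : G → G → G → ℂˣ)
    (hα : ∀ g h k l,
      α h k l * α g (h * k) l * α g h k = α (g * h) k l * α g h (k * l))
    (g : G) :
    ∀ θg : G → G → ℂˣ,
      (θg = fun h k =>
        α g h k * α h k (k⁻¹ * h⁻¹ * g * h * k) * (α h (h⁻¹ * g * h) k)⁻¹) →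
      ∀ h ∈ Subgroup.centralizer ({g} : Set G),
      ∀ k ∈ Subgroup.centralizer ({g} : Set G),
      ∀ l ∈ Subgroup.centralizer ({g} : Set G),
        θg h k * θg (h * k) l = θg k l * θg h (k * l) := by
  intro θg hθ h hh k hk l hl
  subst hθ
  rw [Subgroup.mem_centralizer_iff] at hh hk hl
  have Hh : g * h = h * g := hh g rfl
  have Hk : g * k = k * g := hk g rfl
  have Hl : g * l = l * g := hl g rfl
  have key : ∀ x : G, g * x = x * g → x⁻¹ * g * x = g := by
    intro x hx; rw [mul_assoc, hx, ← mul_assoc, inv_mul_cancel, one_mul]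
  have Hhk : g * (h * k) = (h * k) * g := by
    rw [← mul_assoc, Hh, mul_assoc, Hk, ← mul_assoc]
  have Hkl : g * (k * l) = (k * l) * g := by
    rw [← mul_assoc, Hk, mul_assoc, Hl, ← mul_assoc]
  have conj2 : ∀ x y : G, g * x = x * g → g * y = y * g →
      y⁻¹ * x⁻¹ * g * x * y = g := by
    intro x y hx hy
    calc y⁻¹ * x⁻¹ * g * x * y = y⁻¹ * (x⁻¹ * g * x) * y := by group
    _ = y⁻¹ * g * y := by rw [key x hx]
    _ = g := key y hy
  simp only [conj2 h k Hh Hk, conj2 (h*k) l Hhk Hl, conj2 k l Hk Hl,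
    conj2 h (k*l) Hh Hkl, key h Hh, key (h*k) Hhk, key k Hk]
  have E1 := hα g h k l
  have E2 := hα h g k l
  have E3 := hα h k g l
  have E4 := hα h k l g
  rw [← Hh] at E2
  rw [← Hk, Hl] at E3
  have n1 : ((α h g k : ℂˣ) : ℂ) ≠ 0 := Units.ne_zero _
  have n2 : ((α (h*k) g l : ℂˣ) : ℂ) ≠ 0 := Units.ne_zero _
  have n3 : ((α k g l : ℂˣ) : ℂ) ≠ 0 := Units.ne_zero _
  have n4 : ((α h g (k*l) : ℂˣ) : ℂ) ≠ 0 := Units.ne_zero _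
  rw [Units.ext_iff] at E1 E2 E3 E4 ⊢
  simp only [Units.val_mul, Units.val_inv_eq_inv_val] at E1 E2 E3 E4 ⊢
  field_simp
  have big :
      ((α g h k : ℂ) * (α h k g : ℂ) * ((α g (h * k) l : ℂ) * (α (h * k) l g : ℂ)) *
          ((α k g l : ℂ) * (α h g (k * l) : ℂ))) *
        (((α (g * h) k l : ℂ) * (α g h (k * l) : ℂ)) *
          ((α g k l : ℂ) * (α h (g * k) l : ℂ) * (α h g k : ℂ)) *
          ((α (h * k) g l : ℂ) * (α h k (l * g) : ℂ)) *
          ((α k l g : ℂ) * (α h (k * l) g : ℂ) * (α h k l : ℂ))) =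
      ((α g k l : ℂ) * (α k l g : ℂ) * ((α g h (k * l) : ℂ) * (α h (k * l) g : ℂ)) *
          ((α h g k : ℂ) * (α (h * k) g l : ℂ))) *
        (((α h k l : ℂ) * (α g (h * k) l : ℂ) * (α g h k : ℂ)) *
          ((α (g * h) k l : ℂ) * (α h g (k * l) : ℂ)) *
          ((α k g l : ℂ) * (α h (g * k) l : ℂ) * (α h k g : ℂ)) *
          ((α (h * k) l g : ℂ) * (α h k (l * g) : ℂ))) := by ring
  rw [E2, E4] at big
  rw [E1, E3] at big
  have hc := mul_right_cancel₀ ?_ big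
  · linear_combination hc
  · simp [mul_ne_zero_iff, Units.ne_zero]
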